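/- arXiv:math-ph/0506010 — 2 statements merged into one kernel-verified Lean document; each statement's English description precedes it below -/
import Mathlib

section
/- Let V be a finite-dimensional real vector space and let h : V → V be linear with h ∘ h = h; set U = ker h. Let C, D be subspaces of V with C ∩ D = {0}, C + D = V, and D ⊆ U, and let P : V → V be the projection onto C along D (i.e. P ∘ P = P, range P = C, ker P = D). Then range(P ∘ h) ⊆ C, range(P ∘ h) ∩ (C ∩ U) = {0}, and range(P ∘ h) + (C ∩ U) = C. -/
/-- Fiberwise content of the main assertion of Lemma 4.2: with `h` idempotent,
`U = ker h`, `V = C ⊕ D`, `D ⊆ U`, and `P` the projection onto `C` along `D`,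
one has `Im(P ∘ h) ⊆ C`, `Im(P ∘ h) ∩ (C ∩ U) = {0}` and
`Im(P ∘ h) + (C ∩ U) = C`. -/
theorem stmt_5 (V : Type*) [AddCommGroup V] [Module ℝ V] [FiniteDimensional ℝ V]
    (h : V →ₗ[ℝ] V) (hh : h ∘ₗ h = h)
    (C D : Submodule ℝ V)
    (hCD : C ⊓ D = ⊥) (hsum : C ⊔ D = ⊤)
    (hDU : D ≤ LinearMap.ker h)
    (P : V →ₗ[ℝ] V)
    (hP : P ∘ₗ P = P)
    (hPrange : LinearMap.range P = C)
    (hPker : LinearMap.ker P = D) :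
    LinearMap.range (P ∘ₗ h) ≤ C ∧
      LinearMap.range (P ∘ₗ h) ⊓ (C ⊓ LinearMap.ker h) = ⊥ ∧
      LinearMap.range (P ∘ₗ h) ⊔ (C ⊓ LinearMap.ker h) = C := by
  have hle : LinearMap.range (P ∘ₗ h) ≤ C := by
    rw [← hPrange]
    exact fun x ⟨v, hv⟩ => ⟨h v, hv⟩
  -- key: h (P v) = h v for all v
  have key : ∀ v, h (P v) = h v := by
    intro v
    have hmem : v - P v ∈ LinearMap.ker h := by
      apply hDU
      rw [← hPker]
      have hPP : P (P v) = P v := LinearMap.congr_fun hP v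
      show P (v - P v) = 0
      rw [map_sub, hPP, sub_self]
    have : h (v - P v) = 0 := hmem
    rw [map_sub, sub_eq_zero] at this
    exact this.symm
  refine ⟨hle, ?_, ?_⟩
  · rw [eq_bot_iff]
    rintro x ⟨⟨v, hv⟩, -, hxk⟩
    have hx : h x = 0 := hxk
    have : h v = 0 := by
      have := key (h v)
      have hhv : h (h v) = h v := LinearMap.congr_fun hh v
      rw [show P (h v) = x from hv, hx, hhv] at this
      exact this.symm
    simp only [LinearMap.coe_comp, Function.comp_apply, this, map_zero] at hv
    simp [← hv]
  · apply le_antisymm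
    · exact sup_le hle (inf_le_left)
    · intro c hc
      have h1 : P (h c) ∈ LinearMap.range (P ∘ₗ h) := ⟨c, rfl⟩
      have h2 : c - P (h c) ∈ C ⊓ LinearMap.ker h := by
        constructor
        · exact Submodule.sub_mem _ hc (hPrange ▸ ⟨h c, rfl⟩)
        · show h (c - P (h c)) = 0
          have hhc : h (h c) = h c := LinearMap.congr_fun hh c
          rw [map_sub, key (h c), hhc, sub_self]
      have : P (h c) + (c - P (h c)) ∈ LinearMap.range (P ∘ₗ h) ⊔ (C ⊓ LinearMap.ker h) :=
        Submodule.add_mem_sup h1 h2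
      simpa using this
end

section
/- Let u : ℝ³ → ℝ³ be twice continuously differentiable and let Du(x) denote its 3×3 Jacobian matrix, (Du(x))_{a i} = ∂u^a/∂x^i (x). Define ψ : ℝ³ → ℝ³ by ψ(x) = (1/3)·( adjugate(Du(x)) · u(x) − x ), where adjugate(Du(x)) · u(x) is the matrix-vector product. Then for all x ∈ ℝ³, Σ_{i=1}^3 ∂ψ^i/∂x^i (x) = det(Du(x)) − 1. -/
/-!
By the product rule, the divergence of `y ↦ adj(Du(y)) u(y)` is
`Σ_a div(column a of adj Du) · u_a + tr(adj(Du) Du)`. The trace equals `3 det Du` because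
`adj(M) M = det M • 1`. The divergence terms vanish (Piola identity): column `a` of `adj Du`
is the cross product `∇u_{a+1} × ∇u_{a+2}` of two gradients, and `div(∇f × ∇g) = 0` by the
symmetry of second derivatives. Since `div x = 3`, dividing by 3 leaves `det Du - 1`.
-/

open scoped Matrix

section Differentiability

variable {𝕜 E : Type*} [NontriviallyNormedField 𝕜] [NormedAddCommGroup E] [NormedSpace 𝕜 E]
  {x : E}

theorem DifferentiableAt.mulVec {m n : Type*} [Fintype m] [Fintype n] {A : E → Matrix m n 𝕜}
    {v : E → n → 𝕜} (hA : ∀ a, DifferentiableAt 𝕜 (fun y => (A y)ᵀ a) x)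
    (hv : DifferentiableAt 𝕜 v x) : DifferentiableAt 𝕜 (fun y => A y *ᵥ v y) x := by
  have hAe : ∀ i a, DifferentiableAt 𝕜 (fun y => A y i a) x :=
    fun i a => differentiableAt_pi.1 (hA a) i
  have hve : ∀ a, DifferentiableAt 𝕜 (fun y => v y a) x := differentiableAt_pi.1 hv
  refine differentiableAt_pi.2 fun i => ?_
  simp only [Matrix.mulVec, dotProduct]
  fun_prop

theorem DifferentiableAt.cross {v w : E → Fin 3 → 𝕜} (hv : DifferentiableAt 𝕜 v x)
    (hw : DifferentiableAt 𝕜 w x) : DifferentiableAt 𝕜 (fun y => v y ⨯₃ w y) x := by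
  have hv' := differentiableAt_pi.1 hv
  have hw' := differentiableAt_pi.1 hw
  refine differentiableAt_pi.2 fun i => ?_
  fin_cases i <;> simp [cross_apply] <;> fun_prop

end Differentiability

section Calculus

variable {ι κ : Type*} [Fintype ι] [DecidableEq ι]

noncomputable def partialDeriv (f : (ι → ℝ) → ℝ) (i : ι) (y : ι → ℝ) : ℝ :=
  fderiv ℝ f y (Pi.single i 1)

noncomputable def jacobian (u : (ι → ℝ) → κ → ℝ) (y : ι → ℝ) : Matrix κ ι ℝ :=
  Matrix.of fun b j => fderiv ℝ u y (Pi.single j 1) b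

noncomputable def divergence (F : (ι → ℝ) → ι → ℝ) (y : ι → ℝ) : ℝ :=
  ∑ i, partialDeriv (fun z => F z i) i y

variable {f g : (ι → ℝ) → ℝ} {x : ι → ℝ}

theorem partialDeriv_mul (hf : DifferentiableAt ℝ f x) (hg : DifferentiableAt ℝ g x) (i : ι) :
    partialDeriv (fun y => f y * g y) i x =
      partialDeriv f i x * g x + f x * partialDeriv g i x := by
  simp only [partialDeriv, fderiv_fun_mul hf hg, add_apply, smul_apply, smul_eq_mul]
  ring

theorem partialDeriv_const_mul (c : ℝ) (i : ι) :
    partialDeriv (fun y => c * f y) i x = c * partialDeriv f i x := by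
  change fderiv ℝ (c • f) x _ = _
  rw [fderiv_const_smul_field]
  rfl

theorem partialDeriv_sub (hf : DifferentiableAt ℝ f x) (hg : DifferentiableAt ℝ g x) (i : ι) :
    partialDeriv (fun y => f y - g y) i x = partialDeriv f i x - partialDeriv g i x := by
  simp [partialDeriv, fderiv_fun_sub hf hg]

theorem partialDeriv_sum {α : Type*} (s : Finset α) {F : α → (ι → ℝ) → ℝ}
    (hF : ∀ a ∈ s, DifferentiableAt ℝ (F a) x) (i : ι) :
    partialDeriv (fun y => ∑ a ∈ s, F a y) i x = ∑ a ∈ s, partialDeriv (F a) i x := by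
  simp [partialDeriv, fderiv_fun_sum hF]

theorem jacobian_apply {u : (ι → ℝ) → κ → ℝ} (hu : DifferentiableAt ℝ u x) (b : κ) (j : ι) :
    jacobian u x b j = partialDeriv (fun y => u y b) j x := by
  simp [jacobian, partialDeriv, fderiv_apply hu]

theorem differentiableAt_partialDeriv (hf : ContDiffAt ℝ 2 f x) (i : ι) :
    DifferentiableAt ℝ (partialDeriv f i) x :=
  ((hf.fderiv_right (m := 1) le_rfl).differentiableAt one_ne_zero).clm_apply
    (differentiableAt_const _)

theorem partialDeriv_partialDeriv_eq_fderiv_fderiv (hf : ContDiffAt ℝ 2 f x) (i j : ι) :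
    partialDeriv (partialDeriv f j) i x =
      fderiv ℝ (fderiv ℝ f) x (Pi.single i 1) (Pi.single j 1) := by
  have hdf := (hf.fderiv_right (m := 1) le_rfl).differentiableAt one_ne_zero
  change fderiv ℝ (fun y => fderiv ℝ f y (Pi.single j 1)) x (Pi.single i 1) = _
  simp [fderiv_clm_apply hdf (differentiableAt_const _)]

theorem partialDeriv_comm (hf : ContDiffAt ℝ 2 f x) (i j : ι) :
    partialDeriv (partialDeriv f j) i x = partialDeriv (partialDeriv f i) j x := by
  rw [partialDeriv_partialDeriv_eq_fderiv_fderiv hf, partialDeriv_partialDeriv_eq_fderiv_fderiv hf,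
    hf.isSymmSndFDerivAt (by simp)]

theorem divergence_const_smul (c : ℝ) {F : (ι → ℝ) → ι → ℝ} :
    divergence (fun y => c • F y) x = c * divergence F x := by
  simp [divergence, partialDeriv_const_mul, Finset.mul_sum]

theorem divergence_sub {F G : (ι → ℝ) → ι → ℝ} (hF : DifferentiableAt ℝ F x)
    (hG : DifferentiableAt ℝ G x) :
    divergence (fun y => F y - G y) x = divergence F x - divergence G x := by
  simp [divergence, partialDeriv, fderiv_fun_sub (differentiableAt_pi.1 hF _)
    (differentiableAt_pi.1 hG _)]

theorem divergence_id : divergence (fun y : ι → ℝ => y) x = Fintype.card ι := by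
  have hproj (i : ι) : fderiv ℝ (fun y : ι → ℝ => y i) x = ContinuousLinearMap.proj i :=
    (ContinuousLinearMap.proj (R := ℝ) (φ := fun _ : ι => ℝ) i).fderiv
  simp [divergence, partialDeriv, hproj]

theorem divergence_mulVec {A : (ι → ℝ) → Matrix ι ι ℝ} {v : (ι → ℝ) → ι → ℝ}
    (hA : ∀ a, DifferentiableAt ℝ (fun y => (A y)ᵀ a) x) (hv : DifferentiableAt ℝ v x) :
    divergence (fun y => A y *ᵥ v y) x =
      ∑ a, divergence (fun y => (A y)ᵀ a) x * v x a + (A x * jacobian v x).trace := by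
  have hAe : ∀ i a, DifferentiableAt ℝ (fun y => A y i a) x :=
    fun i a => differentiableAt_pi.1 (hA a) i
  have hve : ∀ a, DifferentiableAt ℝ (fun y => v y a) x := differentiableAt_pi.1 hv
  have hprod (i : ι) :
      partialDeriv (fun y => (A y *ᵥ v y) i) i x =
        ∑ a, (partialDeriv (fun y => A y i a) i x * v x a +
          A x i a * partialDeriv (fun y => v y a) i x) := by
    simp only [Matrix.mulVec, dotProduct]
    rw [partialDeriv_sum (F := fun a y => A y i a * v y a) _ fun a _ => (hAe i a).mul (hve a)]
    exact Finset.sum_congr rfl fun a _ => partialDeriv_mul (hAe i a) (hve a) i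
  simp only [divergence, hprod, Finset.sum_add_distrib, Matrix.trace, Matrix.diag,
    Matrix.mul_apply, jacobian_apply hv, Finset.sum_mul, Matrix.transpose_apply]
  rw [Finset.sum_comm]

end Calculus

theorem Matrix.trace_adjugate_mul {n R : Type*} [Fintype n] [DecidableEq n] [CommRing R]
    (M : Matrix n n R) : (adjugate M * M).trace = Fintype.card n * M.det := by
  rw [adjugate_mul, trace_smul, trace_one, smul_eq_mul, mul_comm]

theorem Matrix.transpose_adjugate_fin_three {R : Type*} [CommRing R]
    (M : Matrix (Fin 3) (Fin 3) R) (a : Fin 3) :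
    (adjugate M)ᵀ a = M (a + 1) ⨯₃ M (a + 2) := by
  fin_cases a <;> ext i <;> fin_cases i <;> simp [adjugate_fin_three, cross_apply] <;> ring

section Dim3

variable {x : Fin 3 → ℝ}

theorem divergence_cross_partialDeriv {f g : (Fin 3 → ℝ) → ℝ} (hf : ContDiffAt ℝ 2 f x)
    (hg : ContDiffAt ℝ 2 g x) :
    divergence (fun y => (fun j => partialDeriv f j y) ⨯₃ (fun j => partialDeriv g j y)) x =
      0 := by
  have hf' := differentiableAt_partialDeriv hf
  have hg' := differentiableAt_partialDeriv hg
  simp only [divergence, Fin.sum_univ_three, cross_apply, Matrix.cons_val_zero,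
    Matrix.cons_val_one, Matrix.cons_val_two, Matrix.tail_cons, Matrix.head_cons]
  rw [partialDeriv_sub (by fun_prop) (by fun_prop), partialDeriv_sub (by fun_prop) (by fun_prop),
    partialDeriv_sub (by fun_prop) (by fun_prop)]
  simp only [partialDeriv_mul (hf' _) (hg' _)]
  rw [partialDeriv_comm hf 0 1, partialDeriv_comm hf 0 2, partialDeriv_comm hf 1 2,
    partialDeriv_comm hg 0 1, partialDeriv_comm hg 0 2, partialDeriv_comm hg 1 2]
  ring

theorem transpose_adjugate_jacobian_eq_cross {u : (Fin 3 → ℝ) → Fin 3 → ℝ}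
    (hu : Differentiable ℝ u) (a : Fin 3) :
    (fun y => (Matrix.adjugate (jacobian u y))ᵀ a) = fun y =>
      (fun j => partialDeriv (fun z => u z (a + 1)) j y) ⨯₃
        (fun j => partialDeriv (fun z => u z (a + 2)) j y) := by
  funext y
  rw [Matrix.transpose_adjugate_fin_three]
  congr <;> exact funext (jacobian_apply (hu y) _)

theorem divergence_transpose_adjugate_jacobian {u : (Fin 3 → ℝ) → Fin 3 → ℝ}
    (hu : ContDiff ℝ 2 u) (a : Fin 3) :
    divergence (fun y => (Matrix.adjugate (jacobian u y))ᵀ a) x = 0 := by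
  rw [transpose_adjugate_jacobian_eq_cross (hu.differentiable two_ne_zero)]
  exact divergence_cross_partialDeriv (contDiff_pi.1 hu _).contDiffAt
    (contDiff_pi.1 hu _).contDiffAt

theorem differentiableAt_transpose_adjugate_jacobian {u : (Fin 3 → ℝ) → Fin 3 → ℝ}
    (hu : ContDiff ℝ 2 u) (a : Fin 3) :
    DifferentiableAt ℝ (fun y => (Matrix.adjugate (jacobian u y))ᵀ a) x := by
  have hgrad (b : Fin 3) : DifferentiableAt ℝ (fun y j => partialDeriv (fun z => u z b) j y) x :=
    differentiableAt_pi.2 (differentiableAt_partialDeriv (contDiff_pi.1 hu b).contDiffAt)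
  rw [transpose_adjugate_jacobian_eq_cross (hu.differentiable two_ne_zero)]
  exact (hgrad _).cross (hgrad _)

end Dim3

/-- Explicit content of Proposition 5.1: the incompressibility constraint
`det(Du) − 1` is the divergence of `ψ(x) = (1/3)(adj(Du(x))·u(x) − x)`. -/
theorem stmt_12 (u : (Fin 3 → ℝ) → (Fin 3 → ℝ)) (hu : ContDiff ℝ 2 u)
    (x : Fin 3 → ℝ) :
    ∑ i : Fin 3,
      fderiv ℝ
        (fun y =>
          (((3 : ℝ)⁻¹) •
            ((Matrix.adjugate
                (Matrix.of fun b j => fderiv ℝ u y (Pi.single j 1) b)).mulVec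
                (u y) - y)) i)
        x (Pi.single i 1) =
      (Matrix.of fun b j => fderiv ℝ u x (Pi.single j 1) b).det - 1 := by
  have hud : DifferentiableAt ℝ u x := hu.differentiable two_ne_zero x
  have hcol := differentiableAt_transpose_adjugate_jacobian (x := x) hu
  change divergence (fun y => (3 : ℝ)⁻¹ • (Matrix.adjugate (jacobian u y) *ᵥ u y - y)) x =
    (jacobian u x).det - 1
  rw [divergence_const_smul, divergence_sub (.mulVec hcol hud) differentiableAt_fun_id,
    divergence_id, divergence_mulVec hcol hud, Matrix.trace_adjugate_mul]
  simp only [divergence_transpose_adjugate_jacobian hu, zero_mul, Finset.sum_const_zero, zero_add,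
    Fintype.card_fin]
  ring
end
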